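/- Let a > 0 be real. Let Ĉ_n(x;a) be the monic Charlier polynomials and let C*_n(x;a) be the associated Charlier polynomials, both defined by the recurrence x·p_n = p_{n+1} + (n+a)·p_n + a·n·p_{n−1}, with initial conditions Ĉ_{−1} = 0, Ĉ_0 = 1 for the monic family and C*_0 = 0, C*_1 = 1 for the associated family. Then for every complex number z not lying in [0,∞), lim_{n→∞} e^a · C*_n(z;a)/Ĉ_n(z;a) = ∑_{k=0}^∞ (a^k/k!) · 1/(z−k). -/

import Mathlib

/-!
Written out, `Ĉ_n(x) = ∑_{i+j=n} C(n,i) (-a)^i (x)_j` with `(x)_j` the falling factorial. Since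
the Poisson weights `w_k = a^k/k!` have factorial moments `∑_k w_k (k)_j = a^j e^a`, this gives
`∑_k w_k Ĉ_{n+1}(k) = e^a (a - a)^{n+1} = 0`. Hence `q_n(z) = ∑_k w_k Ĉ_n(k)/(z-k)` satisfies
the same three-term recurrence as `Ĉ_n(z)` and `C*_n(z)`, and comparing the first two terms
gives `e^a C*_n = S Ĉ_n - q_n` with `S = q_0` the Stieltjes transform of the weights.

It remains to see that `q_n / Ĉ_n → 0`; both are compared with `(z)_n`. Dividing the explicit
formula by `(z)_n` gives `∑_m (a^m/m!) ∏_{l<m} (n-m+l+1)/(n-m+l-z)`, which tends to `e^a` by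
dominated convergence, since each factor tends to `1` and is bounded by `L = 1 + (|z|+1)/d`,
where `d` is the distance from `z` to `[0, ∞)`. On the other hand `|q_n| = O(n!/t^n)` for every
`t > 0`, because `|Ĉ_n(k)| ≤ (k+|a|)^n ≤ n! t^{-n} e^{t(k+|a|)}`, while `|(z)_n| ≥ n!/L^n`.
-/

open Filter Topology Finset
open scoped Nat

def IsCharlierRec (a x : ℂ) (u : ℕ → ℂ) : Prop :=
  ∀ n : ℕ, x * u (n + 1) = u (n + 2) + ((n + 1) + a) * u (n + 1) + a * (n + 1) * u n

theorem IsCharlierRec.ext {a x : ℂ} {u v : ℕ → ℂ} (hu : IsCharlierRec a x u)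
    (hv : IsCharlierRec a x v) (h0 : u 0 = v 0) (h1 : u 1 = v 1) : u = v := by
  funext n
  induction n using Nat.twoStepInduction with
  | zero => exact h0
  | one => exact h1
  | more n ih0 ih1 =>
    linear_combination hv n - hu n + (x - (n + 1) - a) * ih1 - a * (n + 1) * ih0

noncomputable def charlier (a : ℂ) (n : ℕ) (x : ℂ) : ℂ :=
  ∑ p ∈ antidiagonal n, (n.choose p.1 : ℂ) * ((-a) ^ p.1 * (descPochhammer ℂ p.2).eval x)

theorem charlier_zero (a x : ℂ) : charlier a 0 x = 1 := by
  simp [charlier]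

theorem charlier_one (a x : ℂ) : charlier a 1 x = x - a := by
  simp [charlier, Finset.Nat.antidiagonal_succ]
  ring

theorem charlier_succ_add_mul (a x : ℂ) (n : ℕ) :
    charlier a (n + 1) x + a * charlier a n x = ∑ p ∈ antidiagonal n,
      (n.choose p.1 : ℂ) * ((-a) ^ p.1 * (descPochhammer ℂ (p.2 + 1)).eval x) := by
  have hswap : ∑ p ∈ antidiagonal n, (n.choose p.2 : ℂ) * ((-a) ^ (p.1 + 1) *
      (descPochhammer ℂ p.2).eval x) = -a * charlier a n x := by
    rw [charlier, mul_sum]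
    refine sum_congr rfl fun p hp => ?_
    rw [Nat.choose_symm_of_eq_add (mem_antidiagonal.1 hp).symm, pow_succ]
    ring
  rw [charlier,
    sum_antidiagonal_choose_succ_mul (fun i j => (-a) ^ i * (descPochhammer ℂ j).eval x), hswap]
  ring

theorem mul_charlier_succ (a x : ℂ) (n : ℕ) :
    x * charlier a (n + 1) x = ∑ p ∈ antidiagonal (n + 1),
      ((n + 1).choose p.1 : ℂ) * ((-a) ^ p.1 * (descPochhammer ℂ (p.2 + 1)).eval x) +
      (n + 1) * ∑ p ∈ antidiagonal n,
        (n.choose p.1 : ℂ) * ((-a) ^ p.1 * (descPochhammer ℂ (p.2 + 1)).eval x) := by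
  have hshift : ∑ p ∈ antidiagonal (n + 1), ((n + 1).choose p.1 : ℂ) *
      ((-a) ^ p.1 * (p.2 * (descPochhammer ℂ p.2).eval x)) = (n + 1) * ∑ p ∈ antidiagonal n,
        (n.choose p.1 : ℂ) * ((-a) ^ p.1 * (descPochhammer ℂ (p.2 + 1)).eval x) := by
    rw [Finset.Nat.sum_antidiagonal_succ', mul_sum]
    simp only [Nat.cast_zero, zero_mul, mul_zero, zero_add]
    refine sum_congr rfl fun p hp => ?_
    have hp : n = p.1 + p.2 := (mem_antidiagonal.1 hp).symm
    have key : ((n + 1).choose p.1 : ℂ) * (p.2 + 1 : ℕ) = (n + 1) * n.choose p.1 := by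
      rw [Nat.choose_symm_of_eq_add (by omega : n + 1 = p.1 + (p.2 + 1)),
        Nat.choose_symm_of_eq_add hp]
      exact_mod_cast (Nat.add_one_mul_choose_eq n p.2).symm
    push_cast at key ⊢
    linear_combination ((-a) ^ p.1 * (descPochhammer ℂ (p.2 + 1)).eval x) * key
  rw [← hshift, charlier, mul_sum, ← sum_add_distrib]
  refine sum_congr rfl fun p _ => ?_
  rw [descPochhammer_succ_eval]
  ring

theorem isCharlierRec_charlier (a x : ℂ) : IsCharlierRec a x (charlier a · x) := by
  intro n
  linear_combination mul_charlier_succ a x n - charlier_succ_add_mul a x (n + 1) -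
    (n + 1) * charlier_succ_add_mul a x n

theorem Complex.hasSum_pow_div_factorial (a : ℂ) :
    HasSum (fun k : ℕ => a ^ k / k !) (Complex.exp a) := by
  rw [Complex.exp_eq_exp_ℂ]
  exact NormedSpace.expSeries_div_hasSum_exp a

theorem Real.hasSum_pow_div_factorial (x : ℝ) :
    HasSum (fun k : ℕ => x ^ k / k !) (Real.exp x) := by
  rw [Real.exp_eq_exp_ℝ]
  exact NormedSpace.expSeries_div_hasSum_exp x

theorem hasSum_poisson_mul_descPochhammer (a : ℂ) (j : ℕ) :
    HasSum (fun k : ℕ => a ^ k / k ! * (descPochhammer ℂ j).eval (k : ℂ))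
      (a ^ j * Complex.exp a) := by
  rw [← hasSum_nat_add_iff' j]
  have hlow : ∑ k ∈ range j, a ^ k / k ! * (descPochhammer ℂ j).eval (k : ℂ) = 0 :=
    sum_eq_zero fun k hk => by
      rw [descPochhammer_eval_eq_descFactorial, Nat.descFactorial_eq_zero_iff_lt.2 (mem_range.1 hk)]
      simp
  have hshift : (fun m : ℕ => a ^ (m + j) / (m + j)! *
      (descPochhammer ℂ j).eval ((m + j : ℕ) : ℂ)) = fun m => a ^ j * (a ^ m / m !) := by
    funext m
    have hfac : (m ! : ℂ) * (m + j).descFactorial j = (m + j)! := by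
      exact_mod_cast
        Nat.add_sub_cancel m j ▸ Nat.factorial_mul_descFactorial (Nat.le_add_left j m)
    rw [descPochhammer_eval_eq_descFactorial, ← hfac]
    have : ((m + j).descFactorial j : ℂ) ≠ 0 := by
      exact_mod_cast (Nat.descFactorial_pos.2 (Nat.le_add_left j m)).ne'
    field_simp
    ring
  rw [hlow, sub_zero, hshift]
  exact (Complex.hasSum_pow_div_factorial a).mul_left (a ^ j)

theorem hasSum_poisson_mul_charlier (a : ℂ) (n : ℕ) :
    HasSum (fun k : ℕ => a ^ k / k ! * charlier a n k) (0 ^ n * Complex.exp a) := by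
  have hsum := hasSum_sum fun (p : ℕ × ℕ) (_ : p ∈ antidiagonal n) =>
    (hasSum_poisson_mul_descPochhammer a p.2).mul_left ((n.choose p.1 : ℂ) * (-a) ^ p.1)
  have hf : (fun k : ℕ => a ^ k / k ! * charlier a n k) = fun k =>
      ∑ p ∈ antidiagonal n, (n.choose p.1 : ℂ) * (-a) ^ p.1 *
        (a ^ k / k ! * (descPochhammer ℂ p.2).eval (k : ℂ)) := by
    funext k
    rw [charlier, mul_sum]
    exact sum_congr rfl fun p _ => by ring
  have hval : 0 ^ n * Complex.exp a =
      ∑ p ∈ antidiagonal n, (n.choose p.1 : ℂ) * (-a) ^ p.1 * (a ^ p.2 * Complex.exp a) := by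
    rw [← neg_add_cancel a, (Commute.all _ _).add_pow', sum_mul]
    exact sum_congr rfl fun p _ => by rw [nsmul_eq_mul]; ring
  rw [hf, hval]
  exact hsum

theorem norm_charlier_natCast_le (a : ℂ) (n k : ℕ) :
    ‖charlier a n k‖ ≤ (‖a‖ + k) ^ n := by
  rw [(Commute.all _ _).add_pow']
  refine (norm_sum_le _ _).trans (sum_le_sum fun p _ => ?_)
  rw [descPochhammer_eval_eq_descFactorial, nsmul_eq_mul, norm_mul, norm_mul, norm_pow, norm_neg,
    Complex.norm_natCast, Complex.norm_natCast]
  gcongr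
  exact_mod_cast Nat.descFactorial_le_pow k p.2

theorem pow_le_factorial_div_pow_mul_exp {t x : ℝ} (ht : 0 < t) (hx : 0 ≤ x) (n : ℕ) :
    x ^ n ≤ n ! / t ^ n * Real.exp (t * x) := by
  have h := Real.pow_div_factorial_le_exp (t * x) (by positivity) n
  rw [div_le_iff₀ (by positivity), mul_pow] at h
  rw [div_mul_eq_mul_div, le_div_iff₀ (by positivity)]
  linarith

theorem norm_poisson_mul_charlier_le (a : ℂ) {t : ℝ} (ht : 0 < t) (n k : ℕ) :
    ‖a ^ k / k ! * charlier a n k‖ ≤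
      n ! / t ^ n * Real.exp (t * ‖a‖) * ((‖a‖ * Real.exp t) ^ k / k !) := by
  rw [norm_mul, norm_div, norm_pow, Complex.norm_natCast]
  calc ‖a‖ ^ k / k ! * ‖charlier a n k‖
      ≤ ‖a‖ ^ k / k ! * (n ! / t ^ n * Real.exp (t * (‖a‖ + k))) := by
        gcongr
        exact (norm_charlier_natCast_le a n k).trans
          (pow_le_factorial_div_pow_mul_exp ht (by positivity) n)
    _ = n ! / t ^ n * Real.exp (t * ‖a‖) * ((‖a‖ * Real.exp t) ^ k / k !) := by
        rw [mul_add, Real.exp_add, mul_comm t (k : ℝ), Real.exp_nat_mul, mul_pow]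
        ring

theorem descPochhammer_eval_ne_zero {z : ℂ} (hz : ∀ k : ℕ, z - k ≠ 0) (n : ℕ) :
    (descPochhammer ℂ n).eval z ≠ 0 := by
  rw [descPochhammer_eval_eq_prod_range]
  exact prod_ne_zero_iff.2 fun k _ => hz k

theorem charlier_div_descPochhammer_eq_tsum (a z : ℂ) (n : ℕ) :
    charlier a n z / (descPochhammer ℂ n).eval z = ∑' m : ℕ, n.choose m * (-a) ^ m *
      (descPochhammer ℂ (n - m)).eval z / (descPochhammer ℂ n).eval z := by
  rw [charlier, Finset.Nat.sum_antidiagonal_eq_sum_range_succ_mk, sum_div,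
    tsum_eq_sum (s := range (n + 1)) fun m hm => by
      rw [Nat.choose_eq_zero_of_lt (by simpa [Nat.lt_succ_iff] using hm)]
      simp]
  exact sum_congr rfl fun m _ => by ring

theorem choose_mul_div_descPochhammer_eq_prod {z : ℂ} (hz : ∀ k : ℕ, z - k ≠ 0) (a : ℂ)
    (r m : ℕ) : (r + m).choose m * (-a) ^ m * (descPochhammer ℂ r).eval z /
      (descPochhammer ℂ (r + m)).eval z =
      a ^ m / m ! * ∏ l ∈ range m, (((r + l : ℕ) : ℂ) + 1) / ((r + l : ℕ) - z) := by
  have hsplit : (descPochhammer ℂ (r + m)).eval z =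
      (descPochhammer ℂ r).eval z * ∏ l ∈ range m, (z - (r + l : ℕ)) := by
    simp only [descPochhammer_eval_eq_prod_range, prod_range_add]
  have hchoose :
      ((r + m).choose m : ℂ) * m ! = ∏ l ∈ range m, (((r + l : ℕ) : ℂ) + 1) := by
    have h := Nat.ascFactorial_eq_factorial_mul_choose r m
    rw [Nat.ascFactorial_eq_prod_range] at h
    rw [mul_comm]
    exact_mod_cast h.symm.trans (prod_congr rfl fun l _ => by ring)
  have hsign : ∏ l ∈ range m, ((r + l : ℕ) - z) =
      (-1) ^ m * ∏ l ∈ range m, (z - (r + l : ℕ)) := by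
    rw [show ((-1 : ℂ)) ^ m = ∏ _l ∈ range m, (-1 : ℂ) by simp, ← prod_mul_distrib]
    exact prod_congr rfl fun l _ => by ring
  have hP : ∏ l ∈ range m, (z - (r + l : ℕ)) ≠ 0 := prod_ne_zero_iff.2 fun l _ => hz _
  have hr := descPochhammer_eval_ne_zero hz r
  have hfac : (m ! : ℂ) ≠ 0 := Nat.cast_ne_zero.2 m.factorial_ne_zero
  rw [prod_div_distrib, ← hchoose, hsign, hsplit, neg_pow]
  have hsq : ((-1 : ℂ) ^ m) * (-1) ^ m = 1 := by rw [← mul_pow]; norm_num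
  field_simp
  linear_combination ((r + m).choose m : ℂ) * a ^ m * hsq

theorem tendsto_natCast_add_one_div_natCast_sub (z : ℂ) :
    Tendsto (fun i : ℕ => ((i : ℂ) + 1) / (i - z)) atTop (𝓝 1) := by
  have h := (tendsto_add_atTop_iff_nat 1).2 (tendsto_natCast_div_add_atTop (-1 - z))
  refine h.congr fun i => ?_
  push_cast
  ring_nf

/-- The function of the second kind `q_n(z)`. -/
noncomputable def stieltjesCharlier (a z : ℂ) (n : ℕ) : ℂ :=
  ∑' k : ℕ, a ^ k / k ! * (charlier a n k / (z - k))

section AwayFromSpectrum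

variable {z : ℂ} {d : ℝ}

theorem sub_natCast_ne_zero (hd : 0 < d) (hzd : ∀ k : ℕ, d ≤ ‖z - k‖) (k : ℕ) :
    z - k ≠ 0 :=
  norm_pos_iff.1 (hd.trans_le (hzd k))

theorem norm_stieltjesCharlier_term_le (hd : 0 < d) (hzd : ∀ k : ℕ, d ≤ ‖z - k‖) (a : ℂ)
    {t : ℝ} (ht : 0 < t) (n k : ℕ) : ‖a ^ k / k ! * (charlier a n k / (z - k))‖ ≤
      d⁻¹ * (n ! / t ^ n * Real.exp (t * ‖a‖)) * ((‖a‖ * Real.exp t) ^ k / k !) := by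
  rw [← mul_div_assoc, norm_div, div_eq_inv_mul, mul_assoc]
  exact mul_le_mul (inv_anti₀ hd (hzd k)) (norm_poisson_mul_charlier_le a ht n k)
    (norm_nonneg _) (by positivity)

theorem summable_stieltjesCharlier_term (hd : 0 < d) (hzd : ∀ k : ℕ, d ≤ ‖z - k‖)
    (a : ℂ) (n : ℕ) : Summable fun k : ℕ => a ^ k / k ! * (charlier a n k / (z - k)) :=
  .of_norm_bounded ((Real.hasSum_pow_div_factorial _).summable.mul_left _)
    (norm_stieltjesCharlier_term_le hd hzd a one_pos n)

theorem norm_stieltjesCharlier_le (hd : 0 < d) (hzd : ∀ k : ℕ, d ≤ ‖z - k‖) (a : ℂ)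
    {t : ℝ} (ht : 0 < t) (n : ℕ) : ‖stieltjesCharlier a z n‖ ≤
      d⁻¹ * (n ! / t ^ n * Real.exp (t * ‖a‖)) * Real.exp (‖a‖ * Real.exp t) :=
  tsum_of_norm_bounded ((Real.hasSum_pow_div_factorial _).mul_left _)
    (norm_stieltjesCharlier_term_le hd hzd a ht n)

theorem isCharlierRec_stieltjesCharlier (hd : 0 < d) (hzd : ∀ k : ℕ, d ≤ ‖z - k‖)
    (a : ℂ) : IsCharlierRec a z (stieltjesCharlier a z) := by
  intro n
  have hg := fun m => (summable_stieltjesCharlier_term hd hzd a m).hasSum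
  have hlhs := ((hg (n + 1)).mul_left z).sub (hasSum_poisson_mul_charlier a (n + 1))
  have hrhs := ((hg (n + 2)).add ((hg (n + 1)).mul_left ((n + 1) + a))).add
    ((hg n).mul_left (a * (n + 1)))
  have hterm : ∀ k : ℕ, z * (a ^ k / k ! * (charlier a (n + 1) k / (z - k))) -
      a ^ k / k ! * charlier a (n + 1) k =
      a ^ k / k ! * (charlier a (n + 2) k / (z - k)) +
        (n + 1 + a) * (a ^ k / k ! * (charlier a (n + 1) k / (z - k))) +
        a * (n + 1) * (a ^ k / k ! * (charlier a n k / (z - k))) := fun k => by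
    have hzk : z - k ≠ 0 := sub_natCast_ne_zero hd hzd k
    field_simp
    linear_combination (a ^ k / k !) * isCharlierRec_charlier a k n
  simp only [hterm] at hlhs
  rw [pow_succ, mul_zero, zero_mul, sub_zero] at hlhs
  exact hlhs.unique hrhs

theorem stieltjesCharlier_one (hd : 0 < d) (hzd : ∀ k : ℕ, d ≤ ‖z - k‖) (a : ℂ) :
    stieltjesCharlier a z 1 = (z - a) * stieltjesCharlier a z 0 - Complex.exp a := by
  have hterm : ∀ k : ℕ, a ^ k / k ! * (charlier a 1 k / (z - k)) =
      (z - a) * (a ^ k / k ! * (charlier a 0 k / (z - k))) - a ^ k / k ! := fun k => by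
    have hzk : z - k ≠ 0 := sub_natCast_ne_zero hd hzd k
    rw [charlier_one, charlier_zero]
    field_simp
    ring
  have h := (((summable_stieltjesCharlier_term hd hzd a 0).hasSum.mul_left (z - a)).sub
    (Complex.hasSum_pow_div_factorial a))
  simp only [← hterm] at h
  exact h.tsum_eq

theorem exp_mul_eq_stieltjesCharlier (hd : 0 < d) (hzd : ∀ k : ℕ, d ≤ ‖z - k‖) {a : ℂ}
    {u : ℕ → ℂ} (hu : IsCharlierRec a z u) (hu0 : u 0 = 0) (hu1 : u 1 = 1) (n : ℕ) :
    Complex.exp a * u n =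
      stieltjesCharlier a z 0 * charlier a n z - stieltjesCharlier a z n := by
  set S := stieltjesCharlier a z 0
  have hexp : IsCharlierRec a z fun m => Complex.exp a * u m := fun n => by
    linear_combination Complex.exp a * hu n
  have hrhs : IsCharlierRec a z fun m => S * charlier a m z - stieltjesCharlier a z m := fun n => by
    linear_combination S * isCharlierRec_charlier a z n - isCharlierRec_stieltjesCharlier hd hzd a n
  refine congrFun (hexp.ext hrhs ?_ ?_) n
  · simp [hu0, charlier_zero, S]
  · simp only [hu1, charlier_one, stieltjesCharlier_one hd hzd a, S]
    ring

theorem natCast_add_one_le_mul_norm_sub (hd : 0 < d) (hzd : ∀ k : ℕ, d ≤ ‖z - k‖)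
    (i : ℕ) : (i : ℝ) + 1 ≤ (1 + (‖z‖ + 1) / d) * ‖z - i‖ := by
  have hi : (i : ℝ) ≤ ‖z - i‖ + ‖z‖ := by
    simpa [norm_sub_rev] using norm_sub_norm_le (i : ℂ) z
  have hd' : ‖z‖ + 1 ≤ (‖z‖ + 1) / d * ‖z - i‖ := by
    rw [div_mul_eq_mul_div, le_div_iff₀ hd]
    exact mul_le_mul_of_nonneg_left (hzd i) (by positivity)
  linarith

theorem norm_natCast_add_one_div_natCast_sub_le (hd : 0 < d) (hzd : ∀ k : ℕ, d ≤ ‖z - k‖)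
    (i : ℕ) : ‖((i : ℂ) + 1) / (i - z)‖ ≤ 1 + (‖z‖ + 1) / d := by
  have hpos : 0 < ‖z - i‖ := hd.trans_le (hzd i)
  rw [norm_div, norm_sub_rev, div_le_iff₀ hpos]
  exact_mod_cast natCast_add_one_le_mul_norm_sub hd hzd i

theorem factorial_le_pow_mul_norm_descPochhammer (hd : 0 < d) (hzd : ∀ k : ℕ, d ≤ ‖z - k‖)
    (n : ℕ) :
    (n ! : ℝ) ≤ (1 + (‖z‖ + 1) / d) ^ n * ‖(descPochhammer ℂ n).eval z‖ := by
  rw [descPochhammer_eval_eq_prod_range, norm_prod, ← prod_range_add_one_eq_factorial,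
    ← card_range n, ← prod_const, card_range, ← prod_mul_distrib]
  push_cast
  exact prod_le_prod (fun i _ => by positivity) fun i _ => natCast_add_one_le_mul_norm_sub hd hzd i

theorem tendsto_stieltjesCharlier_div_descPochhammer (hd : 0 < d)
    (hzd : ∀ k : ℕ, d ≤ ‖z - k‖) (a : ℂ) :
    Tendsto (fun n => stieltjesCharlier a z n / (descPochhammer ℂ n).eval z) atTop (𝓝 0) := by
  set L := 1 + (‖z‖ + 1) / d
  have hL : 0 < L := by positivity
  set C := d⁻¹ * Real.exp (2 * L * ‖a‖) * Real.exp (‖a‖ * Real.exp (2 * L))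
  have hlim : Tendsto (fun n : ℕ => C * (1 / 2 : ℝ) ^ n) atTop (𝓝 0) := by
    rw [← mul_zero C]
    exact (tendsto_pow_atTop_nhds_zero_of_lt_one (by norm_num) (by norm_num)).const_mul C
  refine squeeze_zero_norm (fun n => ?_) hlim
  have hpos : 0 < ‖(descPochhammer ℂ n).eval z‖ :=
    norm_pos_iff.2 (descPochhammer_eval_ne_zero (sub_natCast_ne_zero hd hzd) n)
  rw [norm_div, div_le_iff₀ hpos]
  calc ‖stieltjesCharlier a z n‖ ≤ C / (2 * L) ^ n * n ! := by
        refine (norm_stieltjesCharlier_le hd hzd a (t := 2 * L) (by positivity) n).trans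
          (le_of_eq ?_)
        ring
    _ ≤ C / (2 * L) ^ n * (L ^ n * ‖(descPochhammer ℂ n).eval z‖) := by
        gcongr
        exact factorial_le_pow_mul_norm_descPochhammer hd hzd n
    _ = C * (1 / 2) ^ n * ‖(descPochhammer ℂ n).eval z‖ := by
        rw [mul_pow, one_div, inv_pow]
        field_simp

theorem tendsto_charlier_div_descPochhammer (hd : 0 < d) (hzd : ∀ k : ℕ, d ≤ ‖z - k‖)
    (a : ℂ) : Tendsto (fun n => charlier a n z / (descPochhammer ℂ n).eval z) atTop
      (𝓝 (Complex.exp a)) := by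
  set L := 1 + (‖z‖ + 1) / d
  have hz := sub_natCast_ne_zero hd hzd
  have hprod_le (r m : ℕ) :
      ‖∏ l ∈ range m, (((r + l : ℕ) : ℂ) + 1) / ((r + l : ℕ) - z)‖ ≤ L ^ m := by
    rw [norm_prod, ← card_range m, ← prod_const, card_range]
    exact prod_le_prod (fun _ _ => norm_nonneg _)
      fun l _ => norm_natCast_add_one_div_natCast_sub_le hd hzd _
  have hterm_tendsto (m : ℕ) : Tendsto (fun n => n.choose m * (-a) ^ m *
      (descPochhammer ℂ (n - m)).eval z / (descPochhammer ℂ n).eval z) atTop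
      (𝓝 (a ^ m / m !)) := by
    rw [← tendsto_add_atTop_iff_nat m]
    simp only [Nat.add_sub_cancel, choose_mul_div_descPochhammer_eq_prod hz]
    have hprod := tendsto_finsetProd (range m) fun l _ =>
      (tendsto_natCast_add_one_div_natCast_sub z).comp (tendsto_add_atTop_nat l)
    simpa using hprod.const_mul (a ^ m / m !)
  have hterm_le (n m : ℕ) : ‖(n.choose m : ℂ) * (-a) ^ m *
      (descPochhammer ℂ (n - m)).eval z / (descPochhammer ℂ n).eval z‖ ≤
      (‖a‖ * L) ^ m / m ! := by
    rcases le_or_gt m n with hmn | hnm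
    · obtain ⟨r, rfl⟩ := Nat.exists_eq_add_of_le' hmn
      rw [Nat.add_sub_cancel, choose_mul_div_descPochhammer_eq_prod hz, norm_mul, norm_div,
        norm_pow, Complex.norm_natCast, mul_pow, mul_div_right_comm]
      gcongr
      exact hprod_le r m
    · simp [Nat.choose_eq_zero_of_lt hnm]
      positivity
  have h := tendsto_tsum_of_dominated_convergence (Real.hasSum_pow_div_factorial _).summable
    hterm_tendsto (.of_forall hterm_le)
  simpa only [← charlier_div_descPochhammer_eq_tsum,
    (Complex.hasSum_pow_div_factorial a).tsum_eq] using h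

end AwayFromSpectrum

theorem exists_pos_le_norm_sub_natCast {z : ℂ} (hz : ∀ t : ℝ, 0 ≤ t → z ≠ (t : ℂ)) :
    ∃ d > 0, ∀ k : ℕ, d ≤ ‖z - k‖ := by
  set s : Set ℂ := (↑) '' Set.Ici (0 : ℝ)
  have hs : IsClosed s := Complex.isometry_ofReal.isClosedEmbedding.isClosedMap _ isClosed_Ici
  have hzs : z ∉ s := by
    rintro ⟨t, ht, rfl⟩
    exact hz t ht rfl
  refine ⟨Metric.infDist z s,
    (hs.notMem_iff_infDist_pos ⟨0, 0, Set.mem_Ici.2 le_rfl, rfl⟩).1 hzs, fun k => ?_⟩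
  rw [← dist_eq_norm]
  exact Metric.infDist_le_dist_of_mem ⟨k, Set.mem_Ici.2 k.cast_nonneg, by simp⟩

theorem assoc_charlier_markov_general (a : ℝ) (Ch Cs : ℕ → ℂ → ℂ)
    (hCh0 : ∀ x : ℂ, Ch 0 x = 1)
    (hChrec0 : ∀ x : ℂ, x * Ch 0 x = Ch 1 x + (a : ℂ) * Ch 0 x)
    (hChrec : ∀ x : ℂ, ∀ n : ℕ, x * Ch (n + 1) x =
      Ch (n + 2) x + (((n : ℂ) + 1) + (a : ℂ)) * Ch (n + 1) x +
        (a : ℂ) * ((n : ℂ) + 1) * Ch n x)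
    (hCs0 : ∀ x : ℂ, Cs 0 x = 0) (hCs1 : ∀ x : ℂ, Cs 1 x = 1)
    (hCsrec : ∀ x : ℂ, ∀ n : ℕ, x * Cs (n + 1) x =
      Cs (n + 2) x + (((n : ℂ) + 1) + (a : ℂ)) * Cs (n + 1) x +
        (a : ℂ) * ((n : ℂ) + 1) * Cs n x)
    (z : ℂ) (hz : ∀ t : ℝ, 0 ≤ t → z ≠ (t : ℂ)) :
    Tendsto (fun n : ℕ => (Real.exp a : ℂ) * Cs n z / Ch n z) atTop
      (𝓝 (∑' k : ℕ, ((a : ℂ) ^ k / (k.factorial : ℂ)) * (1 / (z - k)))) := by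
  obtain ⟨d, hd, hzd⟩ := exists_pos_le_norm_sub_natCast hz
  have hCh : Ch = fun n x => charlier a n x := by
    funext n x
    refine congrFun
      (IsCharlierRec.ext (u := (Ch · x)) (hChrec x) (isCharlierRec_charlier a x) ?_ ?_) n
    · simp [hCh0, charlier_zero]
    · simp only [charlier_one]
      linear_combination -hChrec0 x + (x - a) * hCh0 x
  have hff := descPochhammer_eval_ne_zero (sub_natCast_ne_zero hd hzd)
  have hS : stieltjesCharlier a z 0 = ∑' k : ℕ, (a : ℂ) ^ k / k ! * (1 / (z - k)) := by
    simp [stieltjesCharlier, charlier_zero]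
  have hlim := ((tendsto_charlier_div_descPochhammer hd hzd a).const_mul
    (stieltjesCharlier a z 0)).sub (tendsto_stieltjesCharlier_div_descPochhammer hd hzd a)
  have hlim' := hlim.div (tendsto_charlier_div_descPochhammer hd hzd a) (Complex.exp_ne_zero _)
  rw [sub_zero, mul_div_cancel_right₀ _ (Complex.exp_ne_zero _)] at hlim'
  rw [← hS]
  refine hlim'.congr fun n => ?_
  rw [Pi.div_apply, mul_div_assoc', ← sub_div, div_div_div_cancel_right₀ (hff n),
    Complex.ofReal_exp, exp_mul_eq_stieltjesCharlier hd hzd (u := (Cs · z)) (hCsrec z) (hCs0 z)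
      (hCs1 z), hCh]

/-- **Markov's theorem for the Charlier family.** Let `Ch` be the monic Charlier polynomials
and `Cs` the associated Charlier polynomials, both satisfying the three-term recurrence
`x·p_n = p_{n+1} + (n+a)·p_n + a·n·p_{n−1}`, with `Ĉ_{−1} = 0, Ĉ_0 = 1` for the monic
family (so the recurrence at `n = 0` reads `x·Ĉ_0 = Ĉ_1 + a·Ĉ_0`) and `C*_0 = 0, C*_1 = 1`
for the associated family (recurrence for `n ≥ 1`). Then for every complex `z ∉ [0,∞)`,
`lim_{n→∞} e^a C*_n(z;a) / Ĉ_n(z;a) = ∑_{k=0}^∞ (a^k/k!) / (z−k)`. -/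
theorem assoc_charlier_markov (a : ℝ) (ha : 0 < a) (Ch Cs : ℕ → ℂ → ℂ)
    (hCh0 : ∀ x : ℂ, Ch 0 x = 1)
    (hChrec0 : ∀ x : ℂ, x * Ch 0 x = Ch 1 x + (a : ℂ) * Ch 0 x)
    (hChrec : ∀ x : ℂ, ∀ n : ℕ, x * Ch (n + 1) x =
      Ch (n + 2) x + (((n : ℂ) + 1) + (a : ℂ)) * Ch (n + 1) x +
        (a : ℂ) * ((n : ℂ) + 1) * Ch n x)
    (hCs0 : ∀ x : ℂ, Cs 0 x = 0) (hCs1 : ∀ x : ℂ, Cs 1 x = 1)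
    (hCsrec : ∀ x : ℂ, ∀ n : ℕ, x * Cs (n + 1) x =
      Cs (n + 2) x + (((n : ℂ) + 1) + (a : ℂ)) * Cs (n + 1) x +
        (a : ℂ) * ((n : ℂ) + 1) * Cs n x)
    (z : ℂ) (hz : ∀ t : ℝ, 0 ≤ t → z ≠ (t : ℂ)) :
    Tendsto (fun n : ℕ => (Real.exp a : ℂ) * Cs n z / Ch n z) atTop
      (𝓝 (∑' k : ℕ, ((a : ℂ) ^ k / (k.factorial : ℂ)) * (1 / (z - k)))) :=
  assoc_charlier_markov_general a Ch Cs hCh0 hChrec0 hChrec hCs0 hCs1 hCsrec z hz
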